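/- Let g : ℝ^d → ℝ ∪ {+∞} be proper convex lower semicontinuous, let F_1,…,F_n : ℝ^d → ℝ^d each be L-Lipschitz and μ-strongly monotone, with (1/n)∑_i ‖F_i(z*)‖² ≤ σ*² and ‖F(z*)‖² ≤ σ*², where F = (1/n)∑_i F_i and z* solves the variational inequality for (F, g). Let J be a random index uniformly distributed on {1,…,n}, independent of a random vector z^0. Given a random vector z^t (depending on z^0 and past randomness but such that the update below uses J), define z^{t+1/2} = prox_{γg}(z^t − γ F_J(z^t)) and z^{t+1} = prox_{γg}(z^t − γ F_J(z^{t+1/2})). Then for every γ > 0 and β > 0: E‖z^{t+1} − z*‖² ≤ (1 − γμ) E‖z^t − z*‖² + (γ²L² + 2γμ − 1) E‖z^{t+1/2} − z^t‖² + (2γ²/β) σ*² + 2β E‖z^{t+1/2} − z^0‖². -/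

import Mathlib

/-!
Testing the optimality conditions of the two proximal steps against `z^{t+1}` and `z*`, and the
variational inequality at `z*` against `z^{t+1/2}`, the values of `g` cancel; strong monotonicity
and Lipschitz continuity of `F_J` then give the deterministic bound
`‖z^{t+1} − z*‖² ≤ (1 − γμ)‖z^t − z*‖² + (γ²L² + 2γμ − 1)‖z^{t+1/2} − z^t‖²
  + 2γ⟪F_J(z*) − F(z*), z* − z^{t+1/2}⟫`.
The last term has no reason to be centred, since `z^{t+1/2}` depends on `J`. Young's inequality
moves it to the anchor `z⁰`, which is independent of `J`, at the cost of
`(γ²/β)‖F_J(z*) − F(z*)‖² + β‖z^{t+1/2} − z⁰‖²`; in expectation the anchored term vanishes and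
the variance of `F_J(z*)` is at most its second moment `σ*²`.
-/

open scoped RealInnerProductSpace
open MeasureTheory ProbabilityTheory

theorem nonneg_of_forall_nonneg_add_mul {a b : ℝ}
    (h : ∀ t : ℝ, 0 < t → t ≤ 1 → 0 ≤ a + t * b) : 0 ≤ a := by
  have hlim : Filter.Tendsto (fun t : ℝ => a + t * b) (nhdsWithin 0 (Set.Ioi 0)) (nhds a) := by
    have : Filter.Tendsto (fun t : ℝ => a + t * b) (nhds 0) (nhds (a + 0 * b)) :=
      ((continuous_const.add (continuous_id.mul continuous_const)).tendsto 0)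
    simpa using this.mono_left nhdsWithin_le_nhds
  refine ge_of_tendsto hlim ?_
  filter_upwards [Ioc_mem_nhdsGT (zero_lt_one' ℝ)] with t ht using h t ht.1 ht.2

theorem convexOn_toReal_of_ne_bot {E : Type*} [AddCommGroup E] [Module ℝ E] {g : E → EReal}
    (hg_bot : ∀ x, g x ≠ ⊥)
    (hg_convex : ∀ (x y : E) (a b : ℝ), 0 ≤ a → 0 ≤ b → a + b = 1 →
      g (a • x + b • y) ≤ (a : EReal) * g x + (b : EReal) * g y) :
    ConvexOn ℝ {x | g x ≠ ⊤} fun x => (g x).toReal := by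
  have hlift : ∀ x, g x ≠ ⊤ → g x = ((g x).toReal : EReal) := fun x hx =>
    (EReal.coe_toReal hx (hg_bot x)).symm
  have key : ∀ x, g x ≠ ⊤ → ∀ y, g y ≠ ⊤ → ∀ a b : ℝ, 0 ≤ a → 0 ≤ b → a + b = 1 →
      g (a • x + b • y) ≤ ((a * (g x).toReal + b * (g y).toReal : ℝ) : EReal) := by
    intro x hx y hy a b ha hb hab
    have h := hg_convex x y a b ha hb hab
    rwa [hlift x hx, hlift y hy] at h
  refine ⟨fun x hx y hy a b ha hb hab => ?_, fun x hx y hy a b ha hb hab => ?_⟩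
  · exact ne_top_of_le_ne_top (EReal.coe_ne_top _) (key x hx y hy a b ha hb hab)
  · exact EReal.toReal_le_toReal (key x hx y hy a b ha hb hab) (hg_bot _) (EReal.coe_ne_top _)

theorem prox_ne_top {E : Type*} [SeminormedAddCommGroup E] {g : E → EReal} {γ : ℝ}
    {prox : E → E} (hγ : 0 < γ) (hg_bot : ∀ x, g x ≠ ⊥) {y₀ : E} (hy₀ : g y₀ ≠ ⊤)
    (hprox : ∀ x y : E, (γ : EReal) * g (prox x) + ((‖prox x - x‖ ^ 2 / 2 : ℝ) : EReal)
        ≤ (γ : EReal) * g y + ((‖y - x‖ ^ 2 / 2 : ℝ) : EReal)) (x : E) :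
    g (prox x) ≠ ⊤ := by
  intro htop
  have h := hprox x y₀
  rw [htop, ← EReal.coe_toReal hy₀ (hg_bot y₀), EReal.coe_mul_top_of_pos hγ,
    EReal.top_add_of_ne_bot (EReal.coe_ne_bot _), ← EReal.coe_mul, ← EReal.coe_add,
    top_le_iff] at h
  exact EReal.coe_ne_top _ h

section InnerProductSpace

variable {E : Type*} [NormedAddCommGroup E] [InnerProductSpace ℝ E]

theorem two_mul_inner_le_norm_sq_div_add {β : ℝ} (hβ : 0 < β) (v w : E) :
    2 * ⟪v, w⟫ ≤ ‖v‖ ^ 2 / β + β * ‖w‖ ^ 2 := by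
  have h : 0 ≤ ‖v - β • w‖ ^ 2 / β := by positivity
  rw [norm_sub_sq_real, real_inner_smul_right, norm_smul, Real.norm_of_nonneg hβ.le] at h
  have : (‖v‖ ^ 2 - 2 * (β * ⟪v, w⟫) + (β * ‖w‖) ^ 2) / β
      = ‖v‖ ^ 2 / β - 2 * ⟪v, w⟫ + β * ‖w‖ ^ 2 := by
    field_simp
  linarith

theorem two_mul_inner_le_of_anchor {β : ℝ} (hβ : 0 < β) (γ : ℝ) (a s u w : E) :
    2 * γ * ⟪a, s - u⟫ ≤ 2 * γ * ⟪a, s - w⟫ + γ ^ 2 / β * ‖a‖ ^ 2 + β * ‖u - w‖ ^ 2 := by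
  have h := two_mul_inner_le_norm_sq_div_add hβ (γ • a) (w - u)
  rw [real_inner_smul_left, norm_smul, mul_pow, Real.norm_eq_abs, sq_abs, norm_sub_rev w u,
    mul_div_right_comm] at h
  rw [← sub_add_sub_cancel s w u, inner_add_right]
  linarith

theorem ConvexOn.inner_sub_le_of_isMinOn {C : Set E} {φ : E → ℝ} (hφ : ConvexOn ℝ C φ)
    {x u y : E} (hu : u ∈ C) (hy : y ∈ C)
    (hmin : IsMinOn (fun w => φ w + ‖w - x‖ ^ 2 / 2) C u) :
    ⟪x - u, y - u⟫ ≤ φ y - φ u := by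
  suffices 0 ≤ φ y - φ u - ⟪x - u, y - u⟫ by linarith
  refine nonneg_of_forall_nonneg_add_mul (b := ‖y - u‖ ^ 2 / 2) fun t ht0 ht1 => ?_
  have hw : (1 - t) • u + t • y ∈ C := hφ.1 hu hy (by linarith) ht0.le (by ring)
  have hconv := hφ.2 hu hy (by linarith : 0 ≤ 1 - t) ht0.le (by ring)
  have hmin_t := hmin hw
  have hsplit : (1 - t) • u + t • y - x = (u - x) + t • (y - u) := by module
  simp only [Set.mem_ofPred_eq, hsplit, norm_add_sq_real, inner_smul_right, norm_smul,
    Real.norm_of_nonneg ht0.le, smul_eq_mul] at hmin_t hconv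
  rw [← neg_sub x u, inner_neg_left, norm_neg] at hmin_t
  have key : 0 ≤ t * (φ y - φ u - ⟪x - u, y - u⟫ + t * (‖y - u‖ ^ 2 / 2)) := by nlinarith
  exact (mul_nonneg_iff_of_pos_left ht0).1 key

theorem prox_inner_sub_le {g : E → EReal} {γ : ℝ} {prox : E → E} (hγ : 0 < γ)
    (hg_bot : ∀ x, g x ≠ ⊥)
    (hg_convex : ∀ (x y : E) (a b : ℝ), 0 ≤ a → 0 ≤ b → a + b = 1 →
      g (a • x + b • y) ≤ (a : EReal) * g x + (b : EReal) * g y)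
    (hprox : ∀ x y : E, (γ : EReal) * g (prox x) + ((‖prox x - x‖ ^ 2 / 2 : ℝ) : EReal)
        ≤ (γ : EReal) * g y + ((‖y - x‖ ^ 2 / 2 : ℝ) : EReal))
    (hfin : ∀ x, g (prox x) ≠ ⊤) (x : E) {y : E} (hy : g y ≠ ⊤) :
    ⟪x - prox x, y - prox x⟫ ≤ γ * ((g y).toReal - (g (prox x)).toReal) := by
  have hmin : IsMinOn (fun w => γ * (g w).toReal + ‖w - x‖ ^ 2 / 2) {w | g w ≠ ⊤} (prox x) := by
    intro w hw
    have h := hprox x w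
    rw [← EReal.coe_toReal (hfin x) (hg_bot _), ← EReal.coe_toReal hw (hg_bot _)] at h
    exact_mod_cast h
  rw [mul_sub]
  exact ((convexOn_toReal_of_ne_bot hg_bot hg_convex).smul hγ.le).inner_sub_le_of_isMinOn
    (hfin x) hy hmin

/-- `z, u, p, s` stand for `z^t, z^{t+1/2}, z^{t+1}, z*`, `gs, gu, gp` for the values of `g` at
`s, u, p`, and `m` for `F(z*)`. -/
theorem extragradient_sq_dist_le {γ μ L gs gu gp : ℝ} (hγ : 0 ≤ γ) (hμ : 0 ≤ μ)
    {z u p s Tz Tu Ts m : E}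
    (hp : ⟪(z - γ • Tu) - p, s - p⟫ ≤ γ * (gs - gp))
    (hu : ⟪(z - γ • Tz) - u, p - u⟫ ≤ γ * (gp - gu))
    (hs : gs ≤ ⟪m, u - s⟫ + gu)
    (hlip : ‖Tz - Tu‖ ≤ L * ‖z - u‖)
    (hmono : μ * ‖u - s‖ ^ 2 ≤ ⟪Tu - Ts, u - s⟫) :
    ‖p - s‖ ^ 2 ≤ (1 - γ * μ) * ‖z - s‖ ^ 2 + (γ ^ 2 * L ^ 2 + 2 * γ * μ - 1) * ‖u - z‖ ^ 2
      + 2 * γ * ⟪Ts - m, s - u⟫ := by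
  have hregroup : ⟪(z - γ • Tu) - p, s - p⟫ + ⟪(z - γ • Tz) - u, p - u⟫ - γ * ⟪m, u - s⟫
      = ⟪z - p, s - p⟫ + ⟪z - u, p - u⟫
        + γ * (⟪Tu - Ts, u - s⟫ + ⟪Ts - m, u - s⟫ - ⟪Tz - Tu, p - u⟫) := by
    simp only [inner_sub_left, inner_sub_right, inner_smul_left, conj_trivial, real_inner_comm]
    ring
  have hcos_p : ‖z - s‖ ^ 2 = ‖z - p‖ ^ 2 - 2 * ⟪z - p, s - p⟫ + ‖p - s‖ ^ 2 := by
    rw [norm_sub_rev p s, ← norm_sub_sq_real, sub_sub_sub_cancel_right]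
  have hcos_u : ‖z - p‖ ^ 2 = ‖u - z‖ ^ 2 - 2 * ⟪z - u, p - u⟫ + ‖p - u‖ ^ 2 := by
    rw [norm_sub_rev u z, ← norm_sub_sq_real, sub_sub_sub_cancel_right]
  have hyoung : 2 * γ * ⟪Tz - Tu, p - u⟫ ≤ γ ^ 2 * L ^ 2 * ‖u - z‖ ^ 2 + ‖p - u‖ ^ 2 := by
    have h := two_mul_inner_le_norm_sq_div_add one_pos (γ • (Tz - Tu)) (p - u)
    have hsq : ‖Tz - Tu‖ ^ 2 ≤ L ^ 2 * ‖u - z‖ ^ 2 := by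
      rw [← mul_pow, norm_sub_rev u z]
      exact pow_le_pow_left₀ (norm_nonneg _) hlip 2
    rw [inner_smul_left, norm_smul, mul_pow, Real.norm_eq_abs, sq_abs] at h
    simp only [conj_trivial, div_one, one_mul] at h
    nlinarith [mul_le_mul_of_nonneg_left hsq (sq_nonneg γ)]
  have htri : ‖z - s‖ ^ 2 ≤ 2 * ‖u - z‖ ^ 2 + 2 * ‖u - s‖ ^ 2 := by
    have h := parallelogram_law_with_norm ℝ (z - u) (u - s)
    rw [sub_add_sub_cancel, norm_sub_rev z u] at h
    nlinarith [sq_nonneg ‖z - u - (u - s)‖]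
  have hflip : ⟪Ts - m, s - u⟫ = -⟪Ts - m, u - s⟫ := by rw [← inner_neg_right, neg_sub]
  nlinarith [mul_le_mul_of_nonneg_left hs hγ, mul_le_mul_of_nonneg_left hmono hγ,
    mul_le_mul_of_nonneg_left htri (mul_nonneg hγ hμ)]

theorem extragradient_prox_sq_dist_le {g : E → EReal} {prox T : E → E} {γ μ L : ℝ}
    (hγ : 0 < γ) (hμ : 0 ≤ μ) (hg_bot : ∀ x, g x ≠ ⊥)
    (hg_convex : ∀ (x y : E) (a b : ℝ), 0 ≤ a → 0 ≤ b → a + b = 1 →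
      g (a • x + b • y) ≤ (a : EReal) * g x + (b : EReal) * g y)
    (hprox : ∀ x y : E, (γ : EReal) * g (prox x) + ((‖prox x - x‖ ^ 2 / 2 : ℝ) : EReal)
        ≤ (γ : EReal) * g y + ((‖y - x‖ ^ 2 / 2 : ℝ) : EReal))
    (hLip : ∀ z₁ z₂, ‖T z₁ - T z₂‖ ≤ L * ‖z₁ - z₂‖)
    (hmono : ∀ z₁ z₂, μ * ‖z₁ - z₂‖ ^ 2 ≤ ⟪T z₁ - T z₂, z₁ - z₂⟫)
    {s m : E} (hs : g s ≠ ⊤) (hVI : ∀ z, g s ≤ ((⟪m, z - s⟫ : ℝ) : EReal) + g z)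
    {z u p : E} (hu : u = prox (z - γ • T z)) (hp : p = prox (z - γ • T u)) :
    ‖p - s‖ ^ 2 ≤ (1 - γ * μ) * ‖z - s‖ ^ 2 + (γ ^ 2 * L ^ 2 + 2 * γ * μ - 1) * ‖u - z‖ ^ 2
      + 2 * γ * ⟪T s - m, s - u⟫ := by
  have hfin := prox_ne_top hγ hg_bot hs hprox
  have hproxVI := prox_inner_sub_le hγ hg_bot hg_convex hprox hfin
  have hp_le := hproxVI (z - γ • T u) hs
  have hu_le := hproxVI (z - γ • T z) (hfin (z - γ • T u))
  rw [← hp] at hp_le hu_le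
  rw [← hu] at hu_le
  have hs_le : (g s).toReal ≤ ⟪m, u - s⟫ + (g u).toReal := by
    have h := hVI u
    rw [← EReal.coe_toReal hs (hg_bot s), ← EReal.coe_toReal (hu ▸ hfin _) (hg_bot u)] at h
    exact_mod_cast h
  exact extragradient_sq_dist_le hγ.le hμ hp_le hu_le hs_le (hLip z u) (hmono u s)

theorem sum_norm_sub_average_sq_le {ι : Type*} [Fintype ι] (x : ι → E) :
    ∑ i, ‖x i - (Fintype.card ι : ℝ)⁻¹ • ∑ j, x j‖ ^ 2 ≤ ∑ i, ‖x i‖ ^ 2 := by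
  set m := (Fintype.card ι : ℝ)⁻¹ • ∑ j, x j
  have hsum : ∑ j, x j = (Fintype.card ι : ℝ) • m := by
    rcases isEmpty_or_nonempty ι with _ | _
    · simp
    · rw [smul_inv_smul₀ (Nat.cast_ne_zero.2 Fintype.card_ne_zero)]
  have hexpand : ∑ i, ‖x i - m‖ ^ 2 = ∑ i, ‖x i‖ ^ 2 - Fintype.card ι * ‖m‖ ^ 2 := by
    simp only [norm_sub_sq_real, Finset.sum_add_distrib, Finset.sum_sub_distrib,
      ← Finset.mul_sum, ← sum_inner, hsum, real_inner_smul_left, real_inner_self_eq_norm_sq,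
      Finset.sum_const, Finset.card_univ, nsmul_eq_mul]
    ring
  rw [hexpand]
  have : (0 : ℝ) ≤ Fintype.card ι * ‖m‖ ^ 2 := by positivity
  linarith

end InnerProductSpace

theorem integrable_norm_of_integrable_norm_sq {α F : Type*} [MeasurableSpace α] {μ : Measure α}
    [IsFiniteMeasure μ] [NormedAddCommGroup F] {f : α → F}
    (hf : Integrable (fun a => ‖f a‖ ^ 2) μ) : Integrable (fun a => ‖f a‖) μ := by
  have hmeas : AEStronglyMeasurable (fun a => ‖f a‖) μ := by
    simpa only [Real.sqrt_sq (norm_nonneg _)] using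
      Real.continuous_sqrt.comp_aestronglyMeasurable hf.1
  exact ((memLp_two_iff_integrable_sq hmeas).2 hf).integrable one_le_two

section Uniform

variable {Ω ι : Type*} [MeasurableSpace Ω] {μ : Measure Ω} [IsProbabilityMeasure μ]
  [Fintype ι] [MeasurableSpace ι] [MeasurableSingletonClass ι] {J : Ω → ι}

theorem integral_comp_of_uniform {E : Type*} [NormedAddCommGroup E] [NormedSpace ℝ E]
    [CompleteSpace E] (hJ : Measurable J)
    (hunif : ∀ i, μ {ω | J ω = i} = (Fintype.card ι : ENNReal)⁻¹) (f : ι → E) :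
    ∫ ω, f (J ω) ∂μ = (Fintype.card ι : ℝ)⁻¹ • ∑ i, f i := by
  rw [← integral_map hJ.aemeasurable (Integrable.of_finite).aestronglyMeasurable,
    integral_fintype Integrable.of_finite, Finset.smul_sum]
  refine Finset.sum_congr rfl fun i _ => ?_
  rw [map_measureReal_apply hJ (measurableSet_singleton i), measureReal_def]
  simp only [Set.preimage, Set.mem_singleton_iff, hunif, ENNReal.toReal_inv,
    ENNReal.toReal_natCast]

variable {E : Type*} [NormedAddCommGroup E] [InnerProductSpace ℝ E]

theorem integral_norm_comp_sub_average_sq_le (hJ : Measurable J)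
    (hunif : ∀ i, μ {ω | J ω = i} = (Fintype.card ι : ENNReal)⁻¹) (x : ι → E) :
    ∫ ω, ‖x (J ω) - (Fintype.card ι : ℝ)⁻¹ • ∑ i, x i‖ ^ 2 ∂μ
      ≤ (Fintype.card ι : ℝ)⁻¹ * ∑ i, ‖x i‖ ^ 2 := by
  rw [integral_comp_of_uniform hJ hunif (fun i => ‖x i - _‖ ^ 2), smul_eq_mul]
  exact mul_le_mul_of_nonneg_left (sum_norm_sub_average_sq_le x) (by positivity)

variable [MeasurableSpace E] [BorelSpace E] {Z : Ω → E}

theorem integrable_inner_comp (hJ : Measurable J) (hJZ : IndepFun J Z μ)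
    (hZ : Integrable Z μ) (a : ι → E) : Integrable (fun ω => ⟪a (J ω), Z ω⟫) μ :=
  (hJZ.comp (measurable_of_finite a) measurable_id).integrable_bilin
    (Integrable.of_finite.comp_measurable hJ) hZ (innerSL ℝ)

theorem integral_inner_comp_sub_average [CompleteSpace E] (hJ : Measurable J)
    (hJZ : IndepFun J Z μ) (hZ : Integrable Z μ)
    (hunif : ∀ i, μ {ω | J ω = i} = (Fintype.card ι : ENNReal)⁻¹) (x : ι → E) :
    ∫ ω, ⟪x (J ω) - (Fintype.card ι : ℝ)⁻¹ • ∑ i, x i, Z ω⟫ ∂μ = 0 := by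
  set m := (Fintype.card ι : ℝ)⁻¹ • ∑ i, x i
  have hx : Integrable (fun ω => x (J ω)) μ := Integrable.of_finite.comp_measurable hJ
  have hmean : ∫ ω, (x (J ω) - m) ∂μ = 0 := by
    rw [integral_sub hx (integrable_const m), integral_comp_of_uniform hJ hunif, integral_const,
      probReal_univ, one_smul, sub_self]
  have hindep : ∫ ω, ⟪x (J ω) - m, Z ω⟫ ∂μ = ⟪∫ ω, (x (J ω) - m) ∂μ, ∫ ω, Z ω ∂μ⟫ :=
    (hJZ.comp (measurable_of_finite fun i => x i - m) measurable_id).integral_bilin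
      (hx.sub (integrable_const m)) hZ (innerSL ℝ)
  rw [hindep, hmean, inner_zero_left]

theorem integral_le_of_le_inner_comp_sub_average [CompleteSpace E] {X A D : Ω → ℝ}
    (hX : ∀ ω, 0 ≤ X ω) (hA : Integrable A μ) (hD : Integrable D μ) (hJ : Measurable J)
    (hunif : ∀ i, μ {ω | J ω = i} = (Fintype.card ι : ENNReal)⁻¹) (hJZ : IndepFun J Z μ)
    (hZ : Integrable Z μ) (x : ι → E) {b c : ℝ} (hc : 0 ≤ c)
    (h : ∀ ω, X ω ≤ A ω + b * ⟪x (J ω) - (Fintype.card ι : ℝ)⁻¹ • ∑ i, x i, Z ω⟫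
      + c * ‖x (J ω) - (Fintype.card ι : ℝ)⁻¹ • ∑ i, x i‖ ^ 2 + D ω) :
    ∫ ω, X ω ∂μ ≤ ∫ ω, A ω ∂μ + c * ((Fintype.card ι : ℝ)⁻¹ * ∑ i, ‖x i‖ ^ 2)
      + ∫ ω, D ω ∂μ := by
  have hcross := integral_inner_comp_sub_average hJ hJZ hZ hunif x
  have hvar := integral_norm_comp_sub_average_sq_le hJ hunif x
  set m := (Fintype.card ι : ℝ)⁻¹ • ∑ i, x i
  have hI := integrable_inner_comp hJ hJZ hZ fun i => x i - m
  have hV : Integrable (fun ω => ‖x (J ω) - m‖ ^ 2) μ :=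
    (Integrable.of_finite (μ := μ.map J) (f := fun i => ‖x i - m‖ ^ 2)).comp_measurable hJ
  calc ∫ ω, X ω ∂μ
      ≤ ∫ ω, (A ω + b * ⟪x (J ω) - m, Z ω⟫ + c * ‖x (J ω) - m‖ ^ 2 + D ω) ∂μ :=
        integral_mono_of_nonneg (ae_of_all _ hX) (by fun_prop) (ae_of_all _ h)
    _ = ∫ ω, A ω ∂μ + b * ∫ ω, ⟪x (J ω) - m, Z ω⟫ ∂μ + c * ∫ ω, ‖x (J ω) - m‖ ^ 2 ∂μ
        + ∫ ω, D ω ∂μ := by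
      rw [integral_add, integral_add, integral_add, integral_const_mul, integral_const_mul]
      all_goals fun_prop
    _ ≤ _ := by
      rw [hcross, mul_zero, add_zero]
      gcongr

end Uniform

theorem stochastic_extragradient_descent_step_general
    (d n : ℕ) (L μ γ β σstar : ℝ)
    (hμ : 0 < μ) (hγ : 0 < γ) (hβ : 0 < β)
    (g : EuclideanSpace ℝ (Fin d) → EReal)
    (hg_bot : ∀ x, g x ≠ ⊥)
    (hg_convex : ∀ (x y : EuclideanSpace ℝ (Fin d)) (a b : ℝ), 0 ≤ a → 0 ≤ b → a + b = 1 →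
      g (a • x + b • y) ≤ (a : EReal) * g x + (b : EReal) * g y)
    (prox : EuclideanSpace ℝ (Fin d) → EuclideanSpace ℝ (Fin d))
    (hprox : ∀ x y : EuclideanSpace ℝ (Fin d),
      (γ : EReal) * g (prox x) + ((‖prox x - x‖ ^ 2 / 2 : ℝ) : EReal)
        ≤ (γ : EReal) * g y + ((‖y - x‖ ^ 2 / 2 : ℝ) : EReal))
    (F : Fin n → EuclideanSpace ℝ (Fin d) → EuclideanSpace ℝ (Fin d))
    (hLip : ∀ (i : Fin n) (z₁ z₂ : EuclideanSpace ℝ (Fin d)),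
      ‖F i z₁ - F i z₂‖ ≤ L * ‖z₁ - z₂‖)
    (hmono : ∀ (i : Fin n) (z₁ z₂ : EuclideanSpace ℝ (Fin d)),
      μ * ‖z₁ - z₂‖ ^ 2 ≤ ⟪F i z₁ - F i z₂, z₁ - z₂⟫)
    (zstar : EuclideanSpace ℝ (Fin d)) (hzstar : g zstar ≠ ⊤)
    (hVI : ∀ z, g zstar ≤ ((⟪(n : ℝ)⁻¹ • ∑ i, F i zstar, z - zstar⟫ : ℝ) : EReal) + g z)
    (hvar1 : (n : ℝ)⁻¹ * ∑ i, ‖F i zstar‖ ^ 2 ≤ σstar ^ 2)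
    (Ω : Type*) [MeasureSpace Ω] [IsProbabilityMeasure (ℙ : Measure Ω)]
    (J : Ω → Fin n) (z0 zt zthalf zt1 : Ω → EuclideanSpace ℝ (Fin d))
    (hJmeas : Measurable J) (hz0meas : Measurable z0)
    (hJunif : ∀ i : Fin n, ℙ {ω | J ω = i} = (n : ENNReal)⁻¹)
    (hindep : IndepFun J z0 ℙ)
    (hzthalf : ∀ ω, zthalf ω = prox (zt ω - γ • F (J ω) (zt ω)))
    (hzt1 : ∀ ω, zt1 ω = prox (zt ω - γ • F (J ω) (zthalf ω)))
    (hint1 : Integrable fun ω => ‖zt ω - zstar‖ ^ 2)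
    (hint3 : Integrable fun ω => ‖zthalf ω - zt ω‖ ^ 2)
    (hint4 : Integrable fun ω => ‖zthalf ω - z0 ω‖ ^ 2) :
    (∫ ω, ‖zt1 ω - zstar‖ ^ 2)
      ≤ (1 - γ * μ) * (∫ ω, ‖zt ω - zstar‖ ^ 2)
        + (γ ^ 2 * L ^ 2 + 2 * γ * μ - 1) * (∫ ω, ‖zthalf ω - zt ω‖ ^ 2)
        + (2 * γ ^ 2 / β) * σstar ^ 2
        + 2 * β * (∫ ω, ‖zthalf ω - z0 ω‖ ^ 2) := by
  have hZ : Integrable fun ω => zstar - z0 ω := by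
    refine Integrable.mono' (((integrable_norm_of_integrable_norm_sq hint1).add
      (integrable_norm_of_integrable_norm_sq hint3)).add
      (integrable_norm_of_integrable_norm_sq hint4))
      (measurable_const.sub hz0meas).aestronglyMeasurable (ae_of_all _ fun ω => ?_)
    rw [Pi.add_apply, Pi.add_apply, norm_sub_rev (zt ω), norm_sub_rev (zthalf ω) (zt ω)]
    exact (norm_sub_le_norm_sub_add_norm_sub _ (zthalf ω) _).trans
      (add_le_add_left (norm_sub_le_norm_sub_add_norm_sub _ _ _) _)
  have hunif : ∀ i, ℙ {ω | J ω = i} = (Fintype.card (Fin n) : ENNReal)⁻¹ := by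
    simpa only [Fintype.card_fin] using hJunif
  have key := integral_le_of_le_inner_comp_sub_average (X := fun ω => ‖zt1 ω - zstar‖ ^ 2)
    (A := fun ω => (1 - γ * μ) * ‖zt ω - zstar‖ ^ 2
      + (γ ^ 2 * L ^ 2 + 2 * γ * μ - 1) * ‖zthalf ω - zt ω‖ ^ 2)
    (D := fun ω => β * ‖zthalf ω - z0 ω‖ ^ 2) (Z := fun ω => zstar - z0 ω) (b := 2 * γ)
    (fun _ => sq_nonneg _) (by fun_prop) (by fun_prop) hJmeas hunif
    (hindep.comp measurable_id (measurable_const.sub measurable_id)) hZ (fun i => F i zstar)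
    (by positivity : 0 ≤ γ ^ 2 / β) fun ω => by
      simp only [Fintype.card_fin]
      linarith [extragradient_prox_sq_dist_le hγ hμ.le hg_bot hg_convex hprox (hLip (J ω))
        (hmono (J ω)) hzstar hVI (hzthalf ω) (hzt1 ω),
        two_mul_inner_le_of_anchor hβ γ (F (J ω) zstar - (n : ℝ)⁻¹ • ∑ i, F i zstar) zstar
          (zthalf ω) (z0 ω)]
  simp only [Fintype.card_fin] at key
  rw [integral_add (by fun_prop) (by fun_prop), integral_const_mul, integral_const_mul,
    integral_const_mul] at key
  have hσ : 0 ≤ γ ^ 2 / β * σstar ^ 2 := by positivity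
  have hdist : 0 ≤ β * ∫ ω, ‖zthalf ω - z0 ω‖ ^ 2 := by positivity
  have hσ2 : 2 * γ ^ 2 / β * σstar ^ 2 = 2 * (γ ^ 2 / β * σstar ^ 2) := by ring
  linarith [mul_le_mul_of_nonneg_left hvar1 (by positivity : 0 ≤ γ ^ 2 / β)]

/-- Expected one-step descent of the stochastic extragradient step
`z^{t+1/2} = prox_{γg}(z^t − γF_J(z^t))`, `z^{t+1} = prox_{γg}(z^t − γF_J(z^{t+1/2}))`
with a uniformly random index `J` independent of `z⁰`:
`E‖z^{t+1} − z*‖² ≤ (1 − γμ)E‖z^t − z*‖² + (γ²L² + 2γμ − 1)E‖z^{t+1/2} − z^t‖²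
  + (2γ²/β)σ*² + 2βE‖z^{t+1/2} − z⁰‖²`. -/
theorem stochastic_extragradient_descent_step
    (d n : ℕ) (hn : 0 < n) (L μ γ β σstar : ℝ)
    (hL : 0 < L) (hμ : 0 < μ) (hγ : 0 < γ) (hβ : 0 < β)
    (g : EuclideanSpace ℝ (Fin d) → EReal)
    (hg_bot : ∀ x, g x ≠ ⊥) (hg_top : ∃ x, g x ≠ ⊤)
    (hg_convex : ∀ (x y : EuclideanSpace ℝ (Fin d)) (a b : ℝ), 0 ≤ a → 0 ≤ b → a + b = 1 →
      g (a • x + b • y) ≤ (a : EReal) * g x + (b : EReal) * g y)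
    (hg_lsc : LowerSemicontinuous g)
    (prox : EuclideanSpace ℝ (Fin d) → EuclideanSpace ℝ (Fin d))
    (hprox : ∀ x y : EuclideanSpace ℝ (Fin d),
      (γ : EReal) * g (prox x) + ((‖prox x - x‖ ^ 2 / 2 : ℝ) : EReal)
        ≤ (γ : EReal) * g y + ((‖y - x‖ ^ 2 / 2 : ℝ) : EReal))
    (F : Fin n → EuclideanSpace ℝ (Fin d) → EuclideanSpace ℝ (Fin d))
    (hLip : ∀ (i : Fin n) (z₁ z₂ : EuclideanSpace ℝ (Fin d)),
      ‖F i z₁ - F i z₂‖ ≤ L * ‖z₁ - z₂‖)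
    (hmono : ∀ (i : Fin n) (z₁ z₂ : EuclideanSpace ℝ (Fin d)),
      μ * ‖z₁ - z₂‖ ^ 2 ≤ ⟪F i z₁ - F i z₂, z₁ - z₂⟫)
    (zstar : EuclideanSpace ℝ (Fin d)) (hzstar : g zstar ≠ ⊤)
    (hVI : ∀ z, g zstar ≤ ((⟪(n : ℝ)⁻¹ • ∑ i, F i zstar, z - zstar⟫ : ℝ) : EReal) + g z)
    (hvar1 : (n : ℝ)⁻¹ * ∑ i, ‖F i zstar‖ ^ 2 ≤ σstar ^ 2)
    (hvar2 : ‖(n : ℝ)⁻¹ • ∑ i, F i zstar‖ ^ 2 ≤ σstar ^ 2)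
    (Ω : Type*) [MeasureSpace Ω] [IsProbabilityMeasure (ℙ : Measure Ω)]
    (J : Ω → Fin n) (z0 zt zthalf zt1 : Ω → EuclideanSpace ℝ (Fin d))
    (hJmeas : Measurable J) (hz0meas : Measurable z0) (hztmeas : Measurable zt)
    (hJunif : ∀ i : Fin n, ℙ {ω | J ω = i} = (n : ENNReal)⁻¹)
    (hindep : IndepFun J z0 ℙ)
    (hzthalf : ∀ ω, zthalf ω = prox (zt ω - γ • F (J ω) (zt ω)))
    (hzt1 : ∀ ω, zt1 ω = prox (zt ω - γ • F (J ω) (zthalf ω)))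
    (hint1 : Integrable fun ω => ‖zt ω - zstar‖ ^ 2)
    (hint2 : Integrable fun ω => ‖zt1 ω - zstar‖ ^ 2)
    (hint3 : Integrable fun ω => ‖zthalf ω - zt ω‖ ^ 2)
    (hint4 : Integrable fun ω => ‖zthalf ω - z0 ω‖ ^ 2) :
    (∫ ω, ‖zt1 ω - zstar‖ ^ 2)
      ≤ (1 - γ * μ) * (∫ ω, ‖zt ω - zstar‖ ^ 2)
        + (γ ^ 2 * L ^ 2 + 2 * γ * μ - 1) * (∫ ω, ‖zthalf ω - zt ω‖ ^ 2)
        + (2 * γ ^ 2 / β) * σstar ^ 2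
        + 2 * β * (∫ ω, ‖zthalf ω - z0 ω‖ ^ 2) :=
  stochastic_extragradient_descent_step_general d n L μ γ β σstar hμ hγ hβ g hg_bot hg_convex prox
    hprox F hLip hmono zstar hzstar hVI hvar1 Ω J z0 zt zthalf zt1 hJmeas hz0meas hJunif hindep
    hzthalf hzt1 hint1 hint3 hint4
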